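/- arXiv:1607.00571 — 2 statements merged into one kernel-verified Lean document; each statement's English description precedes it below -/
import Mathlib

section
/- (Exactness of the trimmed serendipity complex) For n, r ≥ 1, the sequence 0 → ℝ → S_r^−Λ^0(ℝ^n) →d S_r^−Λ^1(ℝ^n) →d ⋯ →d S_r^−Λ^n(ℝ^n) → 0 is exact: every ω ∈ S_r^−Λ^k with dω = 0 (and, for k = 0, with ω not constant removed via the augmentation) equals dμ for some μ ∈ S_r^−Λ^{k−1}. -/
open MvPolynomial

/-- Polynomial differential forms on `ℝ^n`: a family of polynomial coefficients indexed by
subsets `σ ⊆ {1,…,n}`; a `k`-form is supported on sets of cardinality `k`. -/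
abbrev PolyForm (n : ℕ) := Finset (Fin n) → MvPolynomial (Fin n) ℝ

/-- The sign `(-1)^{#{j ∈ σ : j < i}}`. -/
noncomputable def sgn {n : ℕ} (σ : Finset (Fin n)) (i : Fin n) : MvPolynomial (Fin n) ℝ :=
  (-1) ^ (σ.filter (fun j => j < i)).card

/-- The exterior derivative `d`. -/
noncomputable def extD (n : ℕ) : PolyForm n →ₗ[ℝ] PolyForm n where
  toFun ω := fun σ => ∑ i ∈ σ, sgn σ i * pderiv i (ω (σ.erase i))
  map_add' ω η := by
    funext σ
    simp [Pi.add_apply, mul_add, Finset.sum_add_distrib]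
  map_smul' c ω := by
    funext σ
    simp [Pi.smul_apply, Finset.smul_sum, mul_smul_comm]

/-- The Koszul operator `κ` (contraction with the position vector field). -/
noncomputable def koszul (n : ℕ) : PolyForm n →ₗ[ℝ] PolyForm n where
  toFun ω := fun σ => ∑ i ∈ σᶜ, sgn σ i * X i * ω (insert i σ)
  map_add' ω η := by
    funext σ
    simp [Pi.add_apply, mul_add, Finset.sum_add_distrib]
  map_smul' c ω := by
    funext σ
    simp [Pi.smul_apply, Finset.smul_sum, mul_smul_comm]

/-- The space of (polynomial) differential `k`-forms: families supported on index sets of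
cardinality `k`. -/
noncomputable def Lambda (n k : ℕ) : Submodule ℝ (PolyForm n) where
  carrier := {ω | ∀ σ, σ.card ≠ k → ω σ = 0}
  zero_mem' := fun σ _ => rfl
  add_mem' := fun ha hb σ h => by simp only [Pi.add_apply, ha σ h, hb σ h, add_zero]
  smul_mem' := fun c ω h σ hσ => by simp only [Pi.smul_apply, h σ hσ, smul_zero]

/-- The form monomial `x^α dx_σ`. -/
noncomputable def formMonomial {n : ℕ} (α : Fin n →₀ ℕ) (σ : Finset (Fin n)) : PolyForm n :=
  fun τ => if τ = σ then monomial α 1 else 0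

/-- The (total) degree `|α|` of a multi-index. -/
def mdeg {n : ℕ} (α : Fin n →₀ ℕ) : ℕ := α.sum fun _ m => m

/-- The linear degree of the form monomial `x^α dx_σ`: the number of `i ∉ σ` with `α i = 1`. -/
def ldeg {n : ℕ} (α : Fin n →₀ ℕ) (σ : Finset (Fin n)) : ℕ :=
  ((σᶜ).filter fun i => α i = 1).card

/-- `H_rΛ^k(ℝ^n)`: `k`-forms with homogeneous degree-`r` polynomial coefficients. -/
noncomputable def Hspace (n r k : ℕ) : Submodule ℝ (PolyForm n) :=
  Submodule.span ℝ {ω | ∃ α σ, σ.card = k ∧ mdeg α = r ∧ ω = formMonomial α σ}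

/-- `P_rΛ^k(ℝ^n)`: `k`-forms with polynomial coefficients of degree at most `r`. -/
noncomputable def Pspace (n r k : ℕ) : Submodule ℝ (PolyForm n) :=
  Submodule.span ℝ {ω | ∃ α σ, σ.card = k ∧ mdeg α ≤ r ∧ ω = formMonomial α σ}

/-- `H_{r,l}Λ^k(ℝ^n)`: homogeneous degree-`r` `k`-forms of linear degree at least `l`. -/
noncomputable def Hl (n r l k : ℕ) : Submodule ℝ (PolyForm n) :=
  Submodule.span ℝ
    {ω | ∃ α σ, σ.card = k ∧ mdeg α = r ∧ l ≤ ldeg α σ ∧ ω = formMonomial α σ}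

/-- `J_rΛ^k(ℝ^n) := Σ_{l ≥ 1} κ H_{r+l-1, l}Λ^{k+1}(ℝ^n)` (here `l` is reindexed as `l+1`). -/
noncomputable def Jspace (n r k : ℕ) : Submodule ℝ (PolyForm n) :=
  ⨆ l : ℕ, Submodule.map (koszul n) (Hl n (r + l) (l + 1) (k + 1))

/-- The trimmed polynomial space `P_r^-Λ^k := P_{r-1}Λ^k ⊕ κ H_{r-1}Λ^{k+1}`. -/
noncomputable def PminusSpace (n r k : ℕ) : Submodule ℝ (PolyForm n) :=
  Pspace n (r - 1) k ⊔ Submodule.map (koszul n) (Hspace n (r - 1) (k + 1))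

/-- The serendipity space `S_rΛ^k := P_rΛ^k + J_rΛ^k + d J_{r+1}Λ^{k-1}`
(the last summand being absent for `k = 0`). -/
noncomputable def Sspace (n r k : ℕ) : Submodule ℝ (PolyForm n) :=
  Pspace n r k ⊔ Jspace n r k ⊔
    (if k = 0 then ⊥ else Submodule.map (extD n) (Jspace n (r + 1) (k - 1)))

/-- The trimmed serendipity space `S_r^-Λ^k := S_{r-1}Λ^k + κ S_{r-1}Λ^{k+1}`. -/
noncomputable def SminusSpace (n r k : ℕ) : Submodule ℝ (PolyForm n) :=
  Sspace n (r - 1) k ⊔ Submodule.map (koszul n) (Sspace n (r - 1) (k + 1))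


/-!
The Koszul operator `κ` is a contracting homotopy for `d` up to a scalar: on a `k`-form whose
coefficients are homogeneous of degree `m`, Euler's identity turns `dκ + κd` into
multiplication by `m + k`. A closed `k`-form `ω` with homogeneous parts `ωₘ` is therefore
`d (∑ₘ (m + k)⁻¹ κ ωₘ)` when `k ≥ 1`, while for `k = 0` the identity reads `m ωₘ = 0`, so `ω`
is constant. The spaces `P_r`, `J_r`, `d J_{r+1}`, and hence `S_r^-Λ^k`, are spanned by
homogeneous forms, so they contain the `ωₘ`; and `κ S_r^-Λ^k = κ S_{r-1}Λ^k ⊆ S_r^-Λ^{k-1}`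
because `κ ∘ κ = 0`.
-/

lemma Finset.sum_sum_erase_eq_zero_of_antisymm {ι G : Type*} [DecidableEq ι] [AddCommGroup G]
    [IsAddTorsionFree G] (s : Finset ι) (f : ι → ι → G)
    (hf : ∀ i ∈ s, ∀ j ∈ s, i ≠ j → f j i = -f i j) :
    ∑ i ∈ s, ∑ j ∈ s.erase i, f i j = 0 := by
  refine self_eq_neg.1 ?_
  calc ∑ i ∈ s, ∑ j ∈ s.erase i, f i j
      = ∑ j ∈ s, ∑ i ∈ s.erase j, f i j :=
        Finset.sum_comm' fun i j => by simp only [Finset.mem_erase]; grind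
    _ = -∑ i ∈ s, ∑ j ∈ s.erase i, f i j := by
        simp only [← Finset.sum_neg_distrib]
        refine Finset.sum_congr rfl fun j hj => Finset.sum_congr rfl fun i hi => ?_
        obtain ⟨hij, hi⟩ := Finset.mem_erase.1 hi
        exact hf j hj i hi hij.symm

section HomogeneousComponent

variable {σ R : Type*} [CommSemiring R]

attribute [local instance] MvPolynomial.gradedAlgebra

lemma coe_decompose_homogeneousSubmodule (p : MvPolynomial σ R) (m : ℕ) :
    (DirectSum.decompose (homogeneousSubmodule σ R) p m : MvPolynomial σ R) =
      homogeneousComponent m p :=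
  decomposition.decompose'_apply p m

lemma homogeneousComponent_succ_X_mul (m : ℕ) (i : σ) (p : MvPolynomial σ R) :
    homogeneousComponent (m + 1) (X i * p) = X i * homogeneousComponent m p := by
  simpa only [coe_decompose_homogeneousSubmodule, Nat.add_sub_cancel] using
    DirectSum.coe_decompose_mul_of_left_mem_of_le (homogeneousSubmodule σ R) (b := p)
      (isHomogeneous_X R i) (Nat.le_add_left 1 m)

lemma homogeneousComponent_zero_X_mul (i : σ) (p : MvPolynomial σ R) :
    homogeneousComponent 0 (X i * p) = 0 := by
  simpa only [coe_decompose_homogeneousSubmodule] using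
    DirectSum.coe_decompose_mul_of_left_mem_of_not_le (homogeneousSubmodule σ R) (b := p)
      (isHomogeneous_X R i) (Nat.not_succ_le_zero 0)

lemma homogeneousComponent_pderiv (m : ℕ) (i : σ) (p : MvPolynomial σ R) :
    homogeneousComponent m (pderiv i p) = pderiv i (homogeneousComponent (m + 1) p) := by
  classical
  ext d
  simp [coeff_homogeneousComponent, coeff_pderiv, Finsupp.degree_single]

end HomogeneousComponent

section Forms

variable {n : ℕ}

lemma sgn_eq_C (σ : Finset (Fin n)) (i : Fin n) :
    sgn σ i = C ((-1 : ℝ) ^ (σ.filter (· < i)).card) := by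
  rw [sgn, map_pow, map_neg, map_one]

lemma sgn_mul_self (σ : Finset (Fin n)) (i : Fin n) : sgn σ i * sgn σ i = 1 := by
  rw [sgn, ← pow_add]
  exact Even.neg_one_pow ⟨_, rfl⟩

lemma sgn_insert {σ : Finset (Fin n)} {j : Fin n} (hj : j ∉ σ) (i : Fin n) :
    sgn (insert j σ) i = (if j < i then -1 else 1) * sgn σ i := by
  rw [sgn, sgn, Finset.filter_insert]
  split_ifs
  · rw [Finset.card_insert_of_notMem fun h => hj (Finset.mem_of_mem_filter j h), pow_succ]
    ring
  · rw [one_mul]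

lemma sgn_insert_self (σ : Finset (Fin n)) (i : Fin n) : sgn (insert i σ) i = sgn σ i := by
  rw [sgn, sgn, Finset.filter_insert, if_neg (lt_irrefl i)]

lemma sgn_erase_self (σ : Finset (Fin n)) (i : Fin n) : sgn (σ.erase i) i = sgn σ i := by
  rw [sgn, sgn, Finset.filter_erase, Finset.erase_eq_of_notMem]
  exact fun h => lt_irrefl i (Finset.mem_filter.1 h).2

lemma sgn_mul_sgn_insert_swap {σ : Finset (Fin n)} {i j : Fin n} (hij : i ≠ j)
    (hi : i ∉ σ) (hj : j ∉ σ) :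
    sgn σ j * sgn (insert j σ) i = -(sgn σ i * sgn (insert i σ) j) := by
  rw [sgn_insert hi, sgn_insert hj]
  rcases hij.lt_or_gt with h | h
  · rw [if_pos h, if_neg h.asymm]; ring
  · rw [if_neg h.asymm, if_pos h]; ring

lemma sgn_mul_sgn_erase {σ : Finset (Fin n)} {i j : Fin n} (hi : i ∈ σ) (hj : j ∉ σ) :
    sgn σ i * sgn (σ.erase i) j = -(sgn σ j * sgn (insert j σ) i) := by
  have hσ : sgn σ j = (if i < j then -1 else 1) * sgn (σ.erase i) j := by
    conv_lhs => rw [← Finset.insert_erase hi]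
    exact sgn_insert (Finset.notMem_erase i σ) j
  rw [hσ, sgn_insert hj, ← sgn_erase_self σ i]
  rcases (ne_of_mem_of_not_mem hi hj).lt_or_gt with h | h
  · rw [if_pos h, if_neg h.asymm]; ring
  · rw [if_neg h.asymm, if_pos h]; ring

lemma extD_apply (ω : PolyForm n) (σ : Finset (Fin n)) :
    extD n ω σ = ∑ i ∈ σ, sgn σ i * pderiv i (ω (σ.erase i)) := rfl

lemma koszul_apply (ω : PolyForm n) (σ : Finset (Fin n)) :
    koszul n ω σ = ∑ i ∈ σᶜ, sgn σ i * X i * ω (insert i σ) := rfl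

lemma koszul_koszul (ω : PolyForm n) : koszul n (koszul n ω) = 0 := by
  funext σ
  have hexpand : ∀ i ∈ σᶜ, sgn σ i * X i * koszul n ω (insert i σ) =
      ∑ j ∈ σᶜ.erase i, sgn σ i * sgn (insert i σ) j * (X i * X j * ω (insert j (insert i σ))) := by
    intro i _
    rw [koszul_apply, Finset.compl_insert, Finset.mul_sum]
    exact Finset.sum_congr rfl fun j _ => by ring
  rw [koszul_apply, Pi.zero_apply, Finset.sum_congr rfl hexpand]
  refine Finset.sum_sum_erase_eq_zero_of_antisymm _ _ fun i hi j hj hij => ?_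
  rw [Finset.insert_comm]
  linear_combination (X i * X j * ω (insert j (insert i σ))) *
    sgn_mul_sgn_insert_swap hij (Finset.mem_compl.1 hi) (Finset.mem_compl.1 hj)

lemma pderiv_sgn_mul (σ : Finset (Fin n)) (i j : Fin n) (p : MvPolynomial (Fin n) ℝ) :
    pderiv j (sgn σ i * p) = sgn σ i * pderiv j p := by
  rw [sgn_eq_C, pderiv_C_mul]

lemma extD_koszul_apply (ω : PolyForm n) (σ : Finset (Fin n)) :
    extD n (koszul n ω) σ = ∑ i ∈ σ, (ω σ + X i * pderiv i (ω σ)) +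
      ∑ i ∈ σ, ∑ j ∈ σᶜ,
        sgn σ i * sgn (σ.erase i) j * (X j * pderiv i (ω (insert j (σ.erase i)))) := by
  have hterm : ∀ i ∈ σ, sgn σ i * pderiv i (koszul n ω (σ.erase i)) =
      (ω σ + X i * pderiv i (ω σ)) + ∑ j ∈ σᶜ,
        sgn σ i * sgn (σ.erase i) j * (X j * pderiv i (ω (insert j (σ.erase i)))) := by
    intro i hi
    rw [koszul_apply, Finset.compl_erase, Finset.sum_insert (by simpa using hi),
      Finset.insert_erase hi, sgn_erase_self, map_add, map_sum, mul_add, Finset.mul_sum]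
    congr 1
    · rw [mul_assoc, pderiv_sgn_mul, pderiv_mul, pderiv_X_self]
      linear_combination (ω σ + X i * pderiv i (ω σ)) * sgn_mul_self σ i
    · refine Finset.sum_congr rfl fun j hj => ?_
      rw [mul_assoc, pderiv_sgn_mul, pderiv_mul,
        pderiv_X_of_ne (ne_of_mem_of_not_mem hi (Finset.mem_compl.1 hj)).symm]
      ring
  rw [extD_apply, Finset.sum_congr rfl hterm, Finset.sum_add_distrib]

lemma koszul_extD_apply (ω : PolyForm n) (σ : Finset (Fin n)) :
    koszul n (extD n ω) σ = ∑ j ∈ σᶜ, X j * pderiv j (ω σ) -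
      ∑ i ∈ σ, ∑ j ∈ σᶜ,
        sgn σ i * sgn (σ.erase i) j * (X j * pderiv i (ω (insert j (σ.erase i)))) := by
  have hterm : ∀ j ∈ σᶜ, sgn σ j * X j * extD n ω (insert j σ) = X j * pderiv j (ω σ) -
      ∑ i ∈ σ, sgn σ i * sgn (σ.erase i) j * (X j * pderiv i (ω (insert j (σ.erase i)))) := by
    intro j hj
    have hj : j ∉ σ := Finset.mem_compl.1 hj
    have hcross : ∀ i ∈ σ,
        sgn σ j * X j * (sgn (insert j σ) i * pderiv i (ω ((insert j σ).erase i))) =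
          -(sgn σ i * sgn (σ.erase i) j * (X j * pderiv i (ω (insert j (σ.erase i))))) := by
      intro i hi
      rw [Finset.erase_insert_of_ne (ne_of_mem_of_not_mem hi hj).symm]
      linear_combination (X j * pderiv i (ω (insert j (σ.erase i)))) * sgn_mul_sgn_erase hi hj
    rw [extD_apply, Finset.sum_insert hj, Finset.erase_insert hj, sgn_insert_self, mul_add,
      Finset.mul_sum, Finset.sum_congr rfl hcross, Finset.sum_neg_distrib, ← sub_eq_add_neg]
    linear_combination (X j * pderiv j (ω σ)) * sgn_mul_self σ j
  rw [koszul_apply, Finset.sum_congr rfl hterm, Finset.sum_sub_distrib, Finset.sum_comm]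

/-- The cross terms of `dκ` and `κd` cancel. -/
lemma extD_koszul_add_koszul_extD_apply (ω : PolyForm n) (σ : Finset (Fin n)) :
    extD n (koszul n ω) σ + koszul n (extD n ω) σ =
      σ.card * ω σ + ∑ i, X i * pderiv i (ω σ) := by
  rw [extD_koszul_apply, koszul_extD_apply,
    ← Finset.sum_add_sum_compl σ fun i => X i * pderiv i (ω σ), Finset.sum_add_distrib,
    Finset.sum_const, nsmul_eq_mul]
  ring

lemma formMonomial_mem_Lambda {k : ℕ} (α : Fin n →₀ ℕ) {σ : Finset (Fin n)} (hσ : σ.card = k) :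
    formMonomial α σ ∈ Lambda n k := by
  intro τ hτ
  exact if_neg fun h : τ = σ => hτ (h ▸ hσ)

lemma map_extD_Lambda_le (k : ℕ) : (Lambda n k).map (extD n) ≤ Lambda n (k + 1) := by
  rintro _ ⟨ω, hω, rfl⟩ σ hσ
  refine Finset.sum_eq_zero fun i hi => ?_
  have := Finset.card_pos.2 ⟨i, hi⟩
  rw [hω _ (by rw [Finset.card_erase_of_mem hi]; omega), map_zero, mul_zero]

lemma map_koszul_Lambda_le (k : ℕ) : (Lambda n (k + 1)).map (koszul n) ≤ Lambda n k := by
  rintro _ ⟨ω, hω, rfl⟩ σ hσ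
  refine Finset.sum_eq_zero fun i hi => ?_
  rw [hω _ (by rw [Finset.card_insert_of_notMem (Finset.mem_compl.1 hi)]; omega), mul_zero]

lemma koszul_eq_zero_of_mem_Lambda_zero {ω : PolyForm n} (hω : ω ∈ Lambda n 0) :
    koszul n ω = 0 :=
  funext fun σ => Finset.sum_eq_zero fun i hi => by
    rw [hω _ (Finset.card_ne_zero_of_mem (Finset.mem_insert_self i σ)), mul_zero]

lemma Pspace_le_Lambda (r k : ℕ) : Pspace n r k ≤ Lambda n k :=
  Submodule.span_le.2 fun _ ⟨α, _, hσ, _, hω⟩ => hω ▸ formMonomial_mem_Lambda α hσ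

lemma Hl_le_Lambda (r l k : ℕ) : Hl n r l k ≤ Lambda n k :=
  Submodule.span_le.2 fun _ ⟨α, _, hσ, _, _, hω⟩ => hω ▸ formMonomial_mem_Lambda α hσ

lemma Jspace_le_Lambda (r k : ℕ) : Jspace n r k ≤ Lambda n k :=
  iSup_le fun _ => (Submodule.map_mono (Hl_le_Lambda _ _ _)).trans (map_koszul_Lambda_le k)

lemma Sspace_le_Lambda (r k : ℕ) : Sspace n r k ≤ Lambda n k := by
  refine sup_le (sup_le (Pspace_le_Lambda r k) (Jspace_le_Lambda r k)) ?_
  split_ifs with hk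
  · exact bot_le
  · obtain ⟨k, rfl⟩ := Nat.exists_eq_add_one_of_ne_zero hk
    exact (Submodule.map_mono (Jspace_le_Lambda _ _)).trans (map_extD_Lambda_le k)

lemma SminusSpace_le_Lambda (r k : ℕ) : SminusSpace n r k ≤ Lambda n k :=
  sup_le (Sspace_le_Lambda _ _)
    ((Submodule.map_mono (Sspace_le_Lambda _ _)).trans (map_koszul_Lambda_le k))

lemma map_koszul_SminusSpace_le {r k : ℕ} (hk : 1 ≤ k) :
    (SminusSpace n r k).map (koszul n) ≤ SminusSpace n r (k - 1) := by
  have hκκ : (koszul n).comp (koszul n) = 0 := LinearMap.ext koszul_koszul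
  rw [SminusSpace, Submodule.map_sup, ← Submodule.map_comp, hκκ, Submodule.map_zero, sup_bot_eq,
    SminusSpace, Nat.sub_add_cancel hk]
  exact le_sup_right

end Forms

section HomogeneousPart

variable {n : ℕ}

noncomputable def homogeneousPart (n m : ℕ) : PolyForm n →ₗ[ℝ] PolyForm n :=
  LinearMap.pi fun σ => (homogeneousComponent m).comp (LinearMap.proj σ)

lemma homogeneousPart_apply (m : ℕ) (ω : PolyForm n) (σ : Finset (Fin n)) :
    homogeneousPart n m ω σ = homogeneousComponent m (ω σ) := rfl

lemma homogeneousPart_formMonomial (m : ℕ) (α : Fin n →₀ ℕ) (σ : Finset (Fin n)) :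
    homogeneousPart n m (formMonomial α σ) = if m = mdeg α then formMonomial α σ else 0 := by
  have hα : homogeneousComponent m (monomial α (1 : ℝ)) = if m = mdeg α then monomial α 1 else 0 :=
    homogeneousComponent_of_mem (isHomogeneous_monomial 1 rfl)
  funext τ
  rw [homogeneousPart_apply]
  by_cases hτ : τ = σ <;> split_ifs <;> simp_all [formMonomial]

lemma homogeneousPart_mem_Lambda {k : ℕ} (m : ℕ) {ω : PolyForm n} (hω : ω ∈ Lambda n k) :
    homogeneousPart n m ω ∈ Lambda n k := fun σ hσ => by
  rw [homogeneousPart_apply, hω σ hσ, map_zero]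

lemma homogeneousPart_extD (m : ℕ) (ω : PolyForm n) :
    homogeneousPart n m (extD n ω) = extD n (homogeneousPart n (m + 1) ω) := by
  funext σ
  simp only [homogeneousPart_apply, extD_apply, map_sum, sgn_eq_C, homogeneousComponent_C_mul,
    homogeneousComponent_pderiv]

lemma homogeneousPart_succ_koszul (m : ℕ) (ω : PolyForm n) :
    homogeneousPart n (m + 1) (koszul n ω) = koszul n (homogeneousPart n m ω) := by
  funext σ
  simp only [homogeneousPart_apply, koszul_apply, map_sum, mul_assoc, sgn_eq_C,
    homogeneousComponent_C_mul, homogeneousComponent_succ_X_mul]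

lemma homogeneousPart_zero_koszul (ω : PolyForm n) : homogeneousPart n 0 (koszul n ω) = 0 := by
  funext σ
  simp only [homogeneousPart_apply, koszul_apply, map_sum, mul_assoc, sgn_eq_C,
    homogeneousComponent_C_mul, homogeneousComponent_zero_X_mul, mul_zero,
    Finset.sum_const_zero, Pi.zero_apply]

lemma extD_homogeneousPart_of_extD_eq_zero {ω : PolyForm n} (hd : extD n ω = 0) (m : ℕ) :
    extD n (homogeneousPart n m ω) = 0 := by
  cases m with
  | zero =>
    funext σ
    refine Finset.sum_eq_zero fun i _ => ?_
    rw [homogeneousPart_apply, homogeneousComponent_zero, pderiv_C, mul_zero]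
  | succ m => rw [← homogeneousPart_extD, hd, map_zero]

lemma sum_homogeneousPart (ω : PolyForm n) :
    ∑ m ∈ Finset.range (Finset.univ.sup (fun σ => (ω σ).totalDegree) + 1),
      homogeneousPart n m ω = ω := by
  funext σ
  simp only [Finset.sum_apply, homogeneousPart_apply]
  rw [← Finset.sum_subset (Finset.range_subset_range.2 (Nat.succ_le_succ
      (Finset.le_sup (f := fun σ => (ω σ).totalDegree) (Finset.mem_univ σ))))
    fun m _ hm => homogeneousComponent_eq_zero m (ω σ) (by simpa using hm),
    sum_homogeneousComponent]

/-- Euler's identity `∑ xᵢ ∂ᵢ p = m p` makes `dκ + κd` a scalar on homogeneous forms. -/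
lemma extD_koszul_homogeneousPart {k : ℕ} {ω : PolyForm n} (hω : ω ∈ Lambda n k)
    (hd : extD n ω = 0) (m : ℕ) :
    extD n (koszul n (homogeneousPart n m ω)) = ((m + k : ℕ) : ℝ) • homogeneousPart n m ω := by
  funext σ
  have h := extD_koszul_add_koszul_extD_apply (homogeneousPart n m ω) σ
  rw [extD_homogeneousPart_of_extD_eq_zero hd, map_zero, Pi.zero_apply, add_zero] at h
  rw [h, Pi.smul_apply, homogeneousPart_apply,
    (homogeneousComponent_isHomogeneous m (ω σ)).sum_X_mul_pderiv]
  by_cases hσ : σ.card = k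
  · simp only [hσ, nsmul_eq_mul, Nat.cast_add, smul_eq_C_mul, C_add, map_natCast]
    ring
  · simp [hω σ hσ]

end HomogeneousPart

section IsGraded

variable {n : ℕ}

def IsGraded (p : Submodule ℝ (PolyForm n)) : Prop :=
  ∀ m, p ≤ p.comap (homogeneousPart n m)

lemma IsGraded.sup {p q : Submodule ℝ (PolyForm n)} (hp : IsGraded p) (hq : IsGraded q) :
    IsGraded (p ⊔ q) := fun m =>
  sup_le ((hp m).trans (Submodule.comap_mono le_sup_left))
    ((hq m).trans (Submodule.comap_mono le_sup_right))

lemma IsGraded.iSup {ι : Sort*} {p : ι → Submodule ℝ (PolyForm n)} (hp : ∀ i, IsGraded (p i)) :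
    IsGraded (⨆ i, p i) := fun m =>
  iSup_le fun i => (hp i m).trans (Submodule.comap_mono (le_iSup p i))

lemma isGraded_bot : IsGraded (⊥ : Submodule ℝ (PolyForm n)) := fun _ => bot_le

lemma isGraded_span {s : Set (PolyForm n)}
    (hs : ∀ ω ∈ s, ∃ d, ∀ m, homogeneousPart n m ω = if m = d then ω else 0) :
    IsGraded (Submodule.span ℝ s) := fun m =>
  Submodule.span_le.2 fun ω hω => by
    obtain ⟨d, hd⟩ := hs ω hω
    show homogeneousPart n m ω ∈ Submodule.span ℝ s
    rw [hd]
    split_ifs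
    exacts [Submodule.subset_span hω, zero_mem _]

lemma IsGraded.map_extD {p : Submodule ℝ (PolyForm n)} (hp : IsGraded p) :
    IsGraded (p.map (extD n)) := by
  rintro m _ ⟨ω, hω, rfl⟩
  exact ⟨_, hp (m + 1) hω, (homogeneousPart_extD m ω).symm⟩

lemma IsGraded.map_koszul {p : Submodule ℝ (PolyForm n)} (hp : IsGraded p) :
    IsGraded (p.map (koszul n)) := by
  rintro (_ | m) _ ⟨ω, hω, rfl⟩
  · exact (Submodule.mem_comap.2 (homogeneousPart_zero_koszul ω ▸ zero_mem _))
  · exact ⟨_, hp m hω, (homogeneousPart_succ_koszul m ω).symm⟩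

lemma isGraded_Pspace (r k : ℕ) : IsGraded (Pspace n r k) :=
  isGraded_span fun _ ⟨α, σ, _, _, hω⟩ => ⟨mdeg α, hω ▸ (homogeneousPart_formMonomial · α σ)⟩

lemma isGraded_Hl (r l k : ℕ) : IsGraded (Hl n r l k) :=
  isGraded_span fun _ ⟨α, σ, _, _, _, hω⟩ => ⟨mdeg α, hω ▸ (homogeneousPart_formMonomial · α σ)⟩

lemma isGraded_Jspace (r k : ℕ) : IsGraded (Jspace n r k) :=
  IsGraded.iSup fun _ => (isGraded_Hl _ _ _).map_koszul

lemma isGraded_Sspace (r k : ℕ) : IsGraded (Sspace n r k) := by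
  refine ((isGraded_Pspace r k).sup (isGraded_Jspace r k)).sup ?_
  split_ifs
  exacts [isGraded_bot, (isGraded_Jspace _ _).map_extD]

lemma isGraded_SminusSpace (r k : ℕ) : IsGraded (SminusSpace n r k) :=
  (isGraded_Sspace _ _).sup (isGraded_Sspace _ _).map_koszul

end IsGraded

lemma exists_extD_eq_of_extD_eq_zero {n k : ℕ} (hk : 1 ≤ k) {p : Submodule ℝ (PolyForm n)}
    (hp : IsGraded p) (hpk : p ≤ Lambda n k) {ω : PolyForm n} (hω : ω ∈ p)
    (hd : extD n ω = 0) : ∃ μ ∈ p.map (koszul n), extD n μ = ω := by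
  refine ⟨∑ m ∈ Finset.range (Finset.univ.sup (fun σ => (ω σ).totalDegree) + 1),
    ((m + k : ℕ) : ℝ)⁻¹ • koszul n (homogeneousPart n m ω),
    Submodule.sum_mem _ fun m _ => Submodule.smul_mem _ _ (Submodule.mem_map_of_mem (hp m hω)),
    ?_⟩
  conv_rhs => rw [← sum_homogeneousPart ω]
  rw [map_sum]
  refine Finset.sum_congr rfl fun m _ => ?_
  rw [map_smul, extD_koszul_homogeneousPart (hpk hω) hd, smul_smul,
    inv_mul_cancel₀ (Nat.cast_ne_zero.2 (by omega)), one_smul]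

lemma exists_eq_smul_formMonomial_of_extD_eq_zero {n : ℕ} {ω : PolyForm n}
    (hω : ω ∈ Lambda n 0) (hd : extD n ω = 0) : ∃ c : ℝ, ω = c • formMonomial 0 ∅ := by
  have hpos : ∀ m ≠ 0, homogeneousPart n m ω = 0 := fun m hm => by
    have h := extD_koszul_homogeneousPart hω hd m
    rw [koszul_eq_zero_of_mem_Lambda_zero (homogeneousPart_mem_Lambda m hω), map_zero, eq_comm,
      smul_eq_zero] at h
    exact h.resolve_left (Nat.cast_ne_zero.2 hm)
  have hconst : ω = homogeneousPart n 0 ω := by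
    conv_lhs => rw [← sum_homogeneousPart ω]
    exact Finset.sum_eq_single 0 (fun m _ hm => hpos m hm) (by simp)
  refine ⟨coeff 0 (ω ∅), ?_⟩
  conv_lhs => rw [hconst]
  funext σ
  by_cases hσ : σ = ∅
  · rw [hσ, homogeneousPart_apply, homogeneousComponent_zero, Pi.smul_apply, formMonomial,
      if_pos rfl, smul_monomial, smul_eq_mul, mul_one, C_apply]
  · have hcard : σ.card ≠ 0 := Finset.card_ne_zero.2 (Finset.nonempty_iff_ne_empty.2 hσ)
    rw [homogeneousPart_mem_Lambda 0 hω σ hcard, Pi.smul_apply, formMonomial, if_neg hσ,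
      smul_zero]

theorem Sminus_exact_general (n r : ℕ) :
    (∀ ω ∈ SminusSpace n r 0, extD n ω = 0 →
      ∃ c : ℝ, ω = c • formMonomial (0 : Fin n →₀ ℕ) ∅) ∧
    (∀ k, 1 ≤ k → k ≤ n → ∀ ω ∈ SminusSpace n r k, extD n ω = 0 →
      ∃ μ ∈ SminusSpace n r (k - 1), extD n μ = ω) := by
  refine ⟨fun ω hω hd => exists_eq_smul_formMonomial_of_extD_eq_zero
    (SminusSpace_le_Lambda r 0 hω) hd, fun k hk _ ω hω hd => ?_⟩
  obtain ⟨μ, hμ, rfl⟩ := exists_extD_eq_of_extD_eq_zero hk (isGraded_SminusSpace r k)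
    (SminusSpace_le_Lambda r k) hω hd
  exact ⟨μ, map_koszul_SminusSpace_le hk hμ, rfl⟩

/-- exactness of the trimmed serendipity complex
`0 → ℝ → S_r^-Λ^0 → S_r^-Λ^1 → ⋯ → S_r^-Λ^n → 0`: a closed `0`-form in `S_r^-Λ^0`
is constant, and for `k ≥ 1` every `ω ∈ S_r^-Λ^k` with `dω = 0` is `dμ` for some
`μ ∈ S_r^-Λ^{k-1}` (for `k = n` this includes surjectivity since every `n`-form
is closed). -/
theorem Sminus_exact (n r : ℕ) (hn : 1 ≤ n) (hr : 1 ≤ r) :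
    (∀ ω ∈ SminusSpace n r 0, extD n ω = 0 →
      ∃ c : ℝ, ω = c • formMonomial (0 : Fin n →₀ ℕ) ∅) ∧
    (∀ k, 1 ≤ k → k ≤ n → ∀ ω ∈ SminusSpace n r k, extD n ω = 0 →
      ∃ μ ∈ SminusSpace n r (k - 1), extD n μ = ω) :=
  Sminus_exact_general n r
end

section
/- For n = 2 and all r ≥ 1: dim J_rΛ^0(ℝ^2) = 4 + 4(r−1) + binomial(r−2, 2) − binomial(r+2, 2) and dim J_rΛ^1(ℝ^2) = 0, where binomial(a,b) := 0 when a < b; consequently dim S_r^−Λ^1(□_2) = r² + 2r + 2 for r ≥ 2 and equals 4 for r = 1. -/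
open MvPolynomial

/-!
In the plane a 2-form has linear degree 0 and a 1-form linear degree at most 1, so
`J_rΛ¹ = 0` and `J_rΛ⁰ = κ H_{r,1}Λ¹ = span {x^r y, x y^r}`, which is 2-dimensional for `r ≥ 2`
and 1-dimensional for `r = 1`. Hence `S_r^-Λ¹ = P_r^-Λ¹ + d J_rΛ⁰`.

The sum is direct and `d` is injective on `J_rΛ⁰` because of the Euler identity `κ d = (r + 1)` on
homogeneous 0-forms of degree `r + 1`: `κ` maps `P_r^-Λ¹` into `P_rΛ⁰` (as `κ κ = 0`), whereas
`κ d j = (r + 1) j` has degree exactly `r + 1`. Finally `P_r^-Λ¹ = P_{r-1}Λ¹ ⊕ κ H_{r-1}Λ²`, split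
by degree, with `κ` injective on 2-forms, so its dimension is `r (r + 1) + r`.
-/

open Module Submodule Finset

section LinearAlgebra

variable {K V W : Type*} [Field K] [AddCommGroup V] [Module K V] [AddCommGroup W] [Module K W]

lemma finrank_sup_of_disjoint {s t : Submodule K V} [FiniteDimensional K s]
    [FiniteDimensional K t] (h : Disjoint s t) :
    finrank K ↥(s ⊔ t) = finrank K s + finrank K t := by
  rw [← finrank_sup_add_finrank_inf_eq, disjoint_iff.1 h, finrank_bot, add_zero]

lemma finrank_map_eq_of_disjoint_ker {f : V →ₗ[K] W} {p : Submodule K V}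
    (h : Disjoint p (LinearMap.ker f)) : finrank K (p.map f) = finrank K p := by
  rw [← LinearMap.range_domRestrict]
  exact LinearMap.finrank_range_of_inj <|
    (injective_iff_map_eq_zero _).2 fun x hx => Subtype.ext (LinearMap.disjoint_ker.1 h x x.2 hx)

end LinearAlgebra

section PolynomialForms

variable {n : ℕ}

lemma formMonomial_eq_single (α : Fin n →₀ ℕ) (σ : Finset (Fin n)) :
    formMonomial α σ = Pi.single σ (monomial α 1) := by
  funext τ
  simp [formMonomial, Pi.single_apply]

lemma mdeg_eq_degree (α : Fin n →₀ ℕ) : mdeg α = α.degree := rfl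

lemma mdeg_add_single (α : Fin n →₀ ℕ) (i : Fin n) :
    mdeg (α + Finsupp.single i 1) = mdeg α + 1 := by
  rw [mdeg_eq_degree, map_add, Finsupp.degree_single, ← mdeg_eq_degree]

lemma linearIndependent_formMonomial :
    LinearIndependent ℝ (Function.uncurry (formMonomial (n := n))) := by
  set b := Pi.basis fun _ : Finset (Fin n) => basisMonomials (Fin n) ℝ
  set e := (Equiv.prodComm (Fin n →₀ ℕ) (Finset (Fin n))).trans (Equiv.sigmaEquivProd _ _).symm
  have heq : Function.uncurry (formMonomial (n := n)) = b ∘ e := by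
    funext ⟨α, σ⟩
    simp [b, e, Pi.basis_apply, formMonomial_eq_single]
  rw [heq]
  exact b.linearIndependent.comp e e.injective

lemma finrank_span_formMonomial (S : Finset ((Fin n →₀ ℕ) × Finset (Fin n))) :
    finrank ℝ (span ℝ (Function.uncurry formMonomial '' (S : Set ((Fin n →₀ ℕ) × Finset (Fin n)))))
      = #S := by
  rw [Set.image_eq_range]
  exact (finrank_span_eq_card (linearIndependent_formMonomial.comp _ Subtype.val_injective)).trans
    (Fintype.card_coe S)

lemma Hspace_eq_span (t k : ℕ) :
    Hspace n t k = span ℝ (Function.uncurry formMonomial ''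
      ((univ.finsuppAntidiag t ×ˢ univ.powersetCard k :
        Finset ((Fin n →₀ ℕ) × Finset (Fin n))) : Set ((Fin n →₀ ℕ) × Finset (Fin n)))) := by
  rw [Hspace]
  congr 1
  ext ω
  simp only [Set.mem_ofPred_eq, Set.mem_image, coe_product, Set.mem_prod, mem_coe,
    mem_finsuppAntidiag, mem_powersetCard, mdeg_eq_degree, Finsupp.degree_eq_sum, subset_univ,
    and_true, true_and, Prod.exists, Function.uncurry_apply_pair]
  exact ⟨fun ⟨α, σ, hσ, hα, h⟩ => ⟨α, σ, ⟨hα, hσ⟩, h.symm⟩,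
    fun ⟨α, σ, ⟨hα, hσ⟩, h⟩ => ⟨α, σ, hσ, hα, h.symm⟩⟩

instance (t k : ℕ) : FiniteDimensional ℝ (Hspace n t k) := by
  rw [Hspace_eq_span, ← coe_image]
  exact FiniteDimensional.span_finset ℝ _

lemma finrank_Hspace (t k : ℕ) :
    finrank ℝ (Hspace n t k) = n.choose k * (n + t - 1).choose t := by
  rw [Hspace_eq_span, finrank_span_formMonomial, card_product, card_powersetCard,
    card_finsuppAntidiag_nat_eq_choose, card_univ, Fintype.card_fin, mul_comm]

lemma Pspace_zero (k : ℕ) : Pspace n 0 k = Hspace n 0 k := by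
  simp only [Pspace, Hspace, Nat.le_zero]

lemma Pspace_succ (s k : ℕ) : Pspace n (s + 1) k = Pspace n s k ⊔ Hspace n (s + 1) k := by
  rw [Pspace, Pspace, Hspace, ← span_union]
  congr 1
  ext ω
  simp only [Set.mem_ofPred_eq, Set.mem_union, Nat.le_succ_iff]
  constructor
  · rintro ⟨α, σ, hσ, hα | hα, rfl⟩
    exacts [Or.inl ⟨α, σ, hσ, hα, rfl⟩, Or.inr ⟨α, σ, hσ, hα, rfl⟩]
  · rintro (⟨α, σ, hσ, hα, rfl⟩ | ⟨α, σ, hσ, hα, rfl⟩)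
    exacts [⟨α, σ, hσ, Or.inl hα, rfl⟩, ⟨α, σ, hσ, Or.inr hα, rfl⟩]

lemma Hspace_le_Lambda (t k : ℕ) : Hspace n t k ≤ Lambda n k :=
  span_le.2 fun _ ⟨α, σ, hσ, _, h⟩ τ hτ => by
    rw [h, formMonomial, if_neg (by rintro rfl; exact hτ hσ)]

lemma Hspace_le_Pspace {s t : ℕ} (hts : t ≤ s) (k : ℕ) : Hspace n t k ≤ Pspace n s k :=
  span_mono fun _ ⟨α, σ, hσ, hα, h⟩ => ⟨α, σ, hσ, hα ▸ hts, h⟩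

instance (s k : ℕ) : FiniteDimensional ℝ (Pspace n s k) := by
  induction s with
  | zero => rw [Pspace_zero]; infer_instance
  | succ s ih => rw [Pspace_succ]; infer_instance

instance (r k : ℕ) : FiniteDimensional ℝ (PminusSpace n r k) := by
  rw [PminusSpace]
  infer_instance

lemma disjoint_Pspace_Hspace {s t : ℕ} (hst : s < t) (k k' : ℕ) :
    Disjoint (Pspace n s k) (Hspace n t k') := by
  set π := (homogeneousComponent (σ := Fin n) (R := ℝ) t).compLeft (Finset (Fin n)) with hπ
  have hπ_fm (α : Fin n →₀ ℕ) (σ : Finset (Fin n)) :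
      π (formMonomial α σ) = if t = mdeg α then formMonomial α σ else 0 := by
    funext τ
    have hmono : homogeneousComponent t (monomial α (1 : ℝ)) =
        if t = mdeg α then monomial α 1 else 0 :=
      homogeneousComponent_of_mem (isHomogeneous_monomial 1 rfl)
    simp only [hπ, LinearMap.compLeft_apply, Function.comp_apply, formMonomial, ite_apply,
      Pi.zero_apply]
    split_ifs <;> simp_all
  have hP : Pspace n s k ≤ LinearMap.ker π := span_le.2 fun _ ⟨α, σ, _, hα, h⟩ => by
    rw [h, SetLike.mem_coe, LinearMap.mem_ker, hπ_fm, if_neg (by omega)]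
  have hH : Set.EqOn π LinearMap.id (Hspace n t k') :=
    LinearMap.eqOn_span' fun _ ⟨α, σ, _, hα, h⟩ => by
      rw [h, hπ_fm, if_pos hα.symm, LinearMap.id_apply]
  rw [disjoint_def]
  intro ω hωP hωH
  rw [← LinearMap.id_apply (R := ℝ) ω, ← hH hωH]
  exact hP hωP

lemma finrank_Pspace_succ (s k : ℕ) :
    finrank ℝ (Pspace n (s + 1) k) = finrank ℝ (Pspace n s k) + finrank ℝ (Hspace n (s + 1) k) := by
  rw [Pspace_succ, finrank_sup_of_disjoint (disjoint_Pspace_Hspace s.lt_succ_self k k)]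

lemma koszul_formMonomial_singleton (α : Fin n →₀ ℕ) (i : Fin n) :
    koszul n (formMonomial α {i}) = formMonomial (α + Finsupp.single i 1) ∅ := by
  funext τ
  simp only [koszul, LinearMap.coe_mk, AddHom.coe_mk, formMonomial]
  by_cases hτ : τ = ∅
  · subst hτ
    simp [sgn, Finset.sum_ite_eq', add_comm α, monomial_single_add]
  · rw [if_neg hτ]
    refine sum_eq_zero fun j hj => ?_
    rw [if_neg, mul_zero]
    intro h
    obtain ⟨x, hx⟩ := nonempty_iff_ne_empty.2 hτ
    have hx' : x ∈ ({i} : Finset (Fin n)) := h ▸ mem_insert_of_mem hx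
    have hj' : j ∈ ({i} : Finset (Fin n)) := h ▸ mem_insert_self j τ
    rw [mem_singleton] at hx' hj'
    exact (mem_compl.1 hj) (hj' ▸ hx' ▸ hx)

lemma extD_formMonomial_empty (α : Fin n →₀ ℕ) :
    extD n (formMonomial α ∅) = ∑ i, (α i : ℝ) • formMonomial (α - Finsupp.single i 1) {i} := by
  funext τ
  simp only [extD, LinearMap.coe_mk, AddHom.coe_mk, formMonomial, Finset.sum_apply,
    Pi.smul_apply, smul_ite, smul_zero]
  by_cases hτ : ∃ i, τ = {i}
  · obtain ⟨i, rfl⟩ := hτ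
    simp [sgn, filter_singleton, pderiv_monomial, smul_monomial]
  · simp only [not_exists] at hτ
    rw [sum_eq_zero fun i _ => if_neg (hτ i), sum_eq_zero fun i hi => ?_]
    have hne : τ.erase i ≠ ∅ := by
      rw [Ne, erase_eq_empty_iff]
      exact fun h => h.elim (fun h' => notMem_empty i (h' ▸ hi)) (hτ i)
    rw [if_neg hne, map_zero, mul_zero]

lemma koszul_extD_formMonomial_empty (α : Fin n →₀ ℕ) :
    koszul n (extD n (formMonomial α ∅)) = (mdeg α : ℝ) • formMonomial α ∅ := by
  have hcancel (i : Fin n) :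
      (α i : ℝ) • formMonomial (α - Finsupp.single i 1 + Finsupp.single i 1) ∅ =
        (α i : ℝ) • formMonomial α ∅ := by
    rcases Nat.eq_zero_or_pos (α i) with h | h
    · simp [h]
    · rw [tsub_add_cancel_of_le (Finsupp.single_le_iff.2 h)]
  simp only [extD_formMonomial_empty, map_sum, map_smul, koszul_formMonomial_singleton, hcancel]
  rw [← sum_smul, mdeg_eq_degree, Finsupp.degree_eq_sum, Nat.cast_sum]

lemma koszul_extD_of_mem_Hspace {s : ℕ} {ω : PolyForm n} (hω : ω ∈ Hspace n s 0) :
    koszul n (extD n ω) = (s : ℝ) • ω := by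
  refine LinearMap.eqOn_span (R := ℝ) (f := koszul n ∘ₗ extD n) (g := (s : ℝ) • LinearMap.id)
    ?_ hω
  rintro _ ⟨α, σ, hσ, hα, rfl⟩
  rw [card_eq_zero] at hσ
  simp [hσ, koszul_extD_formMonomial_empty, hα]

lemma map_koszul_Pspace_one_le (s : ℕ) : (Pspace n s 1).map (koszul n) ≤ Pspace n (s + 1) 0 := by
  rw [Pspace, map_span, span_le]
  rintro _ ⟨_, ⟨α, σ, hσ, hα, rfl⟩, rfl⟩
  obtain ⟨i, rfl⟩ := card_eq_one.1 hσ
  rw [koszul_formMonomial_singleton]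
  exact subset_span ⟨_, ∅, card_empty, by rw [mdeg_add_single]; omega, rfl⟩

lemma Hl_eq_bot {r l k : ℕ} (h : n - k < l) : Hl n r l k = ⊥ := by
  rw [Hl, span_eq_bot]
  rintro _ ⟨α, σ, hσ, -, hl, -⟩
  have hcompl : ldeg α σ ≤ n - k := by
    simpa [ldeg, card_compl, hσ] using card_filter_le σᶜ fun i => α i = 1
  omega

lemma Jspace_eq_bot {r k : ℕ} (h : n ≤ k + 1) : Jspace n r k = ⊥ :=
  iSup_eq_bot.2 fun l => by rw [Hl_eq_bot (by omega), Submodule.map_bot]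

end PolynomialForms

section DimensionTwo

lemma Finset.fin_two_cases (σ : Finset (Fin 2)) : σ = ∅ ∨ σ = {0} ∨ σ = {1} ∨ σ = univ := by
  revert σ; decide

lemma Finset.compl_singleton_zero_fin_two : ({0} : Finset (Fin 2))ᶜ = {1} := by decide

lemma Finset.compl_singleton_one_fin_two : ({1} : Finset (Fin 2))ᶜ = {0} := by decide

lemma Finset.pair_zero_one_eq_univ_fin_two : ({0, 1} : Finset (Fin 2)) = univ := by decide

lemma Finset.card_eq_two_iff_fin_two {σ : Finset (Fin 2)} : #σ = 2 ↔ σ = univ := by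
  revert σ; decide

lemma koszul_formMonomial_univ_two (α : Fin 2 →₀ ℕ) :
    koszul 2 (formMonomial α univ) =
      formMonomial (α + Finsupp.single 0 1) {1} - formMonomial (α + Finsupp.single 1 1) {0} := by
  have h10 : ({1, 0} : Finset (Fin 2)) = univ := by decide
  have hu0 : (univ : Finset (Fin 2)) ≠ {0} := by decide
  have hu1 : (univ : Finset (Fin 2)) ≠ {1} := by decide
  funext τ
  rcases Finset.fin_two_cases τ with rfl | rfl | rfl | rfl <;>
    simp [koszul, formMonomial, sgn, add_comm α, monomial_single_add, compl_singleton_zero_fin_two,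
      compl_singleton_one_fin_two, pair_zero_one_eq_univ_fin_two, h10, hu0, hu1,
      filter_singleton]

lemma koszul_koszul_formMonomial_univ_two (α : Fin 2 →₀ ℕ) :
    koszul 2 (koszul 2 (formMonomial α univ)) = 0 := by
  rw [koszul_formMonomial_univ_two, map_sub, koszul_formMonomial_singleton,
    koszul_formMonomial_singleton, add_right_comm, sub_self]

lemma koszul_two_apply_singleton_one (ω : PolyForm 2) : koszul 2 ω {1} = X 0 * ω univ := by
  simp [koszul, sgn, compl_singleton_one_fin_two, pair_zero_one_eq_univ_fin_two,
    filter_singleton]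

lemma eq_zero_of_koszul_eq_zero_two {ω : PolyForm 2} (hω : ω ∈ Lambda 2 2)
    (h : koszul 2 ω = 0) : ω = 0 := by
  funext σ
  by_cases hσ : σ = univ
  · have h1 := congrFun h {1}
    rw [koszul_two_apply_singleton_one, Pi.zero_apply, mul_eq_zero] at h1
    exact hσ ▸ h1.resolve_left (X_ne_zero 0)
  · exact hω σ (by rwa [Ne, card_eq_two_iff_fin_two])

lemma map_koszul_Hspace_two_le (s : ℕ) : (Hspace 2 s 2).map (koszul 2) ≤ Hspace 2 (s + 1) 1 := by
  rw [Hspace, map_span, span_le]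
  rintro _ ⟨_, ⟨α, σ, hσ, hα, rfl⟩, rfl⟩
  rw [card_eq_two_iff_fin_two] at hσ
  subst hσ
  have hdeg (i : Fin 2) : mdeg (α + Finsupp.single i 1) = s + 1 := by rw [mdeg_add_single, hα]
  rw [koszul_formMonomial_univ_two]
  exact sub_mem (subset_span ⟨_, _, card_singleton _, hdeg 0, rfl⟩)
    (subset_span ⟨_, _, card_singleton _, hdeg 1, rfl⟩)

lemma map_koszul_Pspace_two_le (s : ℕ) :
    (Pspace 2 s 2).map (koszul 2) ≤ Pspace 2 s 1 ⊔ (Hspace 2 s 2).map (koszul 2) := by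
  rw [Pspace, map_span, span_le]
  rintro _ ⟨_, ⟨α, σ, hσ, hα, rfl⟩, rfl⟩
  rw [card_eq_two_iff_fin_two] at hσ
  subst hσ
  rcases hα.lt_or_eq with hlt | heq
  · have hdeg (i : Fin 2) : mdeg (α + Finsupp.single i 1) ≤ s := by rw [mdeg_add_single]; omega
    rw [koszul_formMonomial_univ_two]
    exact mem_sup_left (sub_mem (subset_span ⟨_, _, card_singleton _, hdeg 0, rfl⟩)
      (subset_span ⟨_, _, card_singleton _, hdeg 1, rfl⟩))
  · exact mem_sup_right (mem_map_of_mem (subset_span ⟨α, univ, rfl, heq, rfl⟩))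

lemma mdeg_two (α : Fin 2 →₀ ℕ) : mdeg α = α 0 + α 1 := by
  rw [mdeg_eq_degree, Finsupp.degree_eq_sum, Fin.sum_univ_two]

lemma ldeg_singleton_zero_two (α : Fin 2 →₀ ℕ) : ldeg α {0} = if α 1 = 1 then 1 else 0 := by
  rw [ldeg, compl_singleton_zero_fin_two, filter_singleton]
  split_ifs <;> rfl

lemma ldeg_singleton_one_two (α : Fin 2 →₀ ℕ) : ldeg α {1} = if α 0 = 1 then 1 else 0 := by
  rw [ldeg, compl_singleton_one_fin_two, filter_singleton]
  split_ifs <;> rfl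

noncomputable def expXY (a b : ℕ) : Fin 2 →₀ ℕ := Finsupp.single 0 a + Finsupp.single 1 b

@[simp] lemma expXY_apply_zero (a b : ℕ) : expXY a b 0 = a := by simp [expXY]

@[simp] lemma expXY_apply_one (a b : ℕ) : expXY a b 1 = b := by simp [expXY]

lemma eq_expXY_iff {α : Fin 2 →₀ ℕ} {a b : ℕ} : α = expXY a b ↔ α 0 = a ∧ α 1 = b := by
  simp [Finsupp.ext_iff, Fin.forall_fin_two]

lemma expXY_add_single_zero (a b : ℕ) : expXY a b + Finsupp.single 0 1 = expXY (a + 1) b := by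
  simp [eq_expXY_iff]

lemma expXY_add_single_one (a b : ℕ) : expXY a b + Finsupp.single 1 1 = expXY a (b + 1) := by
  simp [eq_expXY_iff]

lemma Hl_two_one_one (s : ℕ) :
    Hl 2 (s + 1) 1 1 = span ℝ {formMonomial (expXY s 1) {0}, formMonomial (expXY 1 s) {1}} := by
  rw [Hl]
  congr 1
  ext ω
  simp only [Set.mem_ofPred_eq, Set.mem_insert_iff, Set.mem_singleton_iff]
  constructor
  · rintro ⟨α, σ, hσ, hα, hl, rfl⟩
    obtain ⟨i, rfl⟩ := card_eq_one.1 hσ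
    rw [mdeg_two] at hα
    obtain rfl | rfl : i = 0 ∨ i = 1 := by omega
    · rw [ldeg_singleton_zero_two] at hl
      split_ifs at hl with h1
      · exact Or.inl (by rw [(eq_expXY_iff (a := s) (b := 1)).2 ⟨by omega, h1⟩])
      · omega
    · rw [ldeg_singleton_one_two] at hl
      split_ifs at hl with h0
      · exact Or.inr (by rw [(eq_expXY_iff (a := 1) (b := s)).2 ⟨h0, by omega⟩])
      · omega
  · rintro (rfl | rfl)
    · exact ⟨_, _, card_singleton _, by simp [mdeg_two], by simp [ldeg_singleton_zero_two], rfl⟩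
    · exact ⟨_, _, card_singleton _, by simp [mdeg_two, add_comm],
        by simp [ldeg_singleton_one_two], rfl⟩

lemma Jspace_two_zero (s : ℕ) :
    Jspace 2 (s + 1) 0 =
      span ℝ {formMonomial (expXY (s + 1) 1) ∅, formMonomial (expXY 1 (s + 1)) ∅} := by
  have hl0 : (Hl 2 (s + 1) 1 1).map (koszul 2) =
      span ℝ {formMonomial (expXY (s + 1) 1) ∅, formMonomial (expXY 1 (s + 1)) ∅} := by
    rw [Hl_two_one_one, map_span, Set.image_pair, koszul_formMonomial_singleton,
      koszul_formMonomial_singleton, expXY_add_single_zero, expXY_add_single_one]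
  refine le_antisymm (iSup_le fun l => ?_) (hl0 ▸ le_iSup_of_le 0 le_rfl)
  rcases l with _ | l
  · exact hl0.le
  · rw [Hl_eq_bot (by omega), Submodule.map_bot]
    exact bot_le

lemma finrank_Jspace_two_zero (s : ℕ) :
    finrank ℝ (Jspace 2 (s + 1) 0) = if s = 0 then 1 else 2 := by
  have h := finrank_span_formMonomial {(expXY (s + 1) 1, ∅), (expXY 1 (s + 1), ∅)}
  rw [coe_insert, coe_singleton, Set.image_pair, Function.uncurry_apply_pair,
    Function.uncurry_apply_pair] at h
  rw [Jspace_two_zero, h]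
  split_ifs with hs
  · simp [hs]
  · rw [card_pair]
    simp [Prod.ext_iff, eq_expXY_iff, hs]

lemma Jspace_two_zero_le_Hspace (s : ℕ) : Jspace 2 (s + 1) 0 ≤ Hspace 2 (s + 2) 0 := by
  rw [Jspace_two_zero, span_le, Set.insert_subset_iff, Set.singleton_subset_iff]
  exact ⟨subset_span ⟨_, _, card_empty, by simp [mdeg_two], rfl⟩,
    subset_span ⟨_, _, card_empty, by simp [mdeg_two]; ring, rfl⟩⟩

lemma finrank_Pspace_two_one (s : ℕ) : finrank ℝ (Pspace 2 s 1) = (s + 1) * (s + 2) := by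
  induction s with
  | zero => rw [Pspace_zero, finrank_Hspace]; rfl
  | succ s ih =>
    rw [finrank_Pspace_succ, ih, finrank_Hspace, show 2 + (s + 1) - 1 = s + 1 + 1 by omega,
      Nat.choose_succ_self_right, Nat.choose_succ_self_right]
    ring

lemma finrank_Hspace_two_two (s : ℕ) : finrank ℝ (Hspace 2 s 2) = s + 1 := by
  rw [finrank_Hspace, show 2 + s - 1 = s + 1 by omega, Nat.choose_succ_self_right, Nat.choose_self,
    one_mul]

lemma finrank_PminusSpace_two_one (s : ℕ) :
    finrank ℝ (PminusSpace 2 (s + 1) 1) = (s + 1) * (s + 3) := by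
  have hdisj : Disjoint (Pspace 2 s 1) ((Hspace 2 s 2).map (koszul 2)) :=
    (disjoint_Pspace_Hspace s.lt_succ_self 1 1).mono_right (map_koszul_Hspace_two_le s)
  have hinj : finrank ℝ ((Hspace 2 s 2).map (koszul 2)) = finrank ℝ (Hspace 2 s 2) :=
    finrank_map_eq_of_disjoint_ker <| LinearMap.disjoint_ker.2 fun _ hω =>
      eq_zero_of_koszul_eq_zero_two (Hspace_le_Lambda _ _ hω)
  rw [PminusSpace, Nat.add_sub_cancel, finrank_sup_of_disjoint hdisj, hinj,
    finrank_Pspace_two_one, finrank_Hspace_two_two]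
  ring

lemma SminusSpace_two_one (s : ℕ) :
    SminusSpace 2 (s + 1) 1 = PminusSpace 2 (s + 1) 1 ⊔ (Jspace 2 (s + 1) 0).map (extD 2) := by
  have hS1 : Sspace 2 s 1 = Pspace 2 s 1 ⊔ (Jspace 2 (s + 1) 0).map (extD 2) := by
    rw [Sspace, if_neg one_ne_zero, Jspace_eq_bot le_rfl, sup_bot_eq, Nat.sub_self]
  have hS2 : Sspace 2 s 2 = Pspace 2 s 2 := by
    rw [Sspace, if_neg two_ne_zero, Jspace_eq_bot (by norm_num), Jspace_eq_bot (by norm_num),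
      Submodule.map_bot, sup_bot_eq, sup_bot_eq]
  rw [SminusSpace, PminusSpace, Nat.add_sub_cancel, hS1, hS2]
  apply le_antisymm
  · refine sup_le (sup_le (le_sup_left.trans le_sup_left) le_sup_right) ?_
    exact (map_koszul_Pspace_two_le s).trans le_sup_left
  · refine sup_le (sup_le (le_sup_left.trans le_sup_left) ?_) (le_sup_right.trans le_sup_left)
    exact (map_mono (Hspace_le_Pspace le_rfl 2)).trans le_sup_right

lemma map_koszul_PminusSpace_two_one_le (s : ℕ) :
    (PminusSpace 2 (s + 1) 1).map (koszul 2) ≤ Pspace 2 (s + 1) 0 := by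
  rw [PminusSpace, Nat.add_sub_cancel, Submodule.map_sup, sup_le_iff]
  refine ⟨map_koszul_Pspace_one_le s, ?_⟩
  rw [Hspace, map_span, map_span, span_le]
  rintro _ ⟨_, ⟨_, ⟨α, σ, hσ, -, rfl⟩, rfl⟩, rfl⟩
  rw [card_eq_two_iff_fin_two] at hσ
  rw [hσ, SetLike.mem_coe, koszul_koszul_formMonomial_univ_two]
  exact zero_mem _

lemma eq_zero_of_mem_Jspace_of_extD_mem_PminusSpace {s : ℕ} {j : PolyForm 2}
    (hj : j ∈ Jspace 2 (s + 1) 0) (hdj : extD 2 j ∈ PminusSpace 2 (s + 1) 1) : j = 0 := by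
  have hjH := Jspace_two_zero_le_Hspace s hj
  have hP : ((s + 2 : ℕ) : ℝ) • j ∈ Pspace 2 (s + 1) 0 :=
    koszul_extD_of_mem_Hspace hjH ▸ map_koszul_PminusSpace_two_one_le s (mem_map_of_mem hdj)
  have h0 := disjoint_def.1 (disjoint_Pspace_Hspace (s + 1).lt_succ_self 0 0) _ hP
    (smul_mem _ _ hjH)
  exact (smul_eq_zero.1 h0).resolve_left (by positivity)

lemma finrank_SminusSpace_two_one (s : ℕ) :
    finrank ℝ (SminusSpace 2 (s + 1) 1) = (s + 1) * (s + 3) + finrank ℝ (Jspace 2 (s + 1) 0) := by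
  have : FiniteDimensional ℝ (Jspace 2 (s + 1) 0) := by
    rw [Jspace_two_zero]
    exact FiniteDimensional.span_of_finite ℝ (Set.toFinite _)
  have hdisj : Disjoint (PminusSpace 2 (s + 1) 1) ((Jspace 2 (s + 1) 0).map (extD 2)) := by
    rw [disjoint_def]
    rintro _ hP ⟨j, hj, rfl⟩
    rw [eq_zero_of_mem_Jspace_of_extD_mem_PminusSpace hj hP, map_zero]
  have hinj : finrank ℝ ((Jspace 2 (s + 1) 0).map (extD 2)) = finrank ℝ (Jspace 2 (s + 1) 0) :=
    finrank_map_eq_of_disjoint_ker <| LinearMap.disjoint_ker.2 fun j hj hdj =>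
      eq_zero_of_mem_Jspace_of_extD_mem_PminusSpace hj (hdj ▸ zero_mem _)
  rw [SminusSpace_two_one, finrank_sup_of_disjoint hdisj, finrank_PminusSpace_two_one, hinj]

end DimensionTwo

/-- in dimension `n = 2`:
`dim J_rΛ^0(ℝ²) = 4 + 4(r−1) + C(r−2, 2) − C(r+2, 2)`, `dim J_rΛ^1(ℝ²) = 0`, and
consequently `dim S_r^-Λ^1(□₂) = r² + 2r + 2` for `r ≥ 2`, and `= 4` for `r = 1`. -/
theorem dims_dimension_two (r : ℕ) (hr : 1 ≤ r) :
    (Module.finrank ℝ (Jspace 2 r 0) : ℤ) =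
      4 + 4 * ((r : ℤ) - 1) + ((r - 2).choose 2 : ℤ) - ((r + 2).choose 2 : ℤ) ∧
    Module.finrank ℝ (Jspace 2 r 1) = 0 ∧
    (2 ≤ r → Module.finrank ℝ (SminusSpace 2 r 1) = r ^ 2 + 2 * r + 2) ∧
    (r = 1 → Module.finrank ℝ (SminusSpace 2 r 1) = 4) := by
  obtain ⟨s, rfl⟩ : ∃ s, r = s + 1 := ⟨r - 1, by omega⟩
  have hJ := finrank_Jspace_two_zero s
  have hS := finrank_SminusSpace_two_one s
  refine ⟨?_, by rw [Jspace_eq_bot le_rfl, finrank_bot], fun hs => ?_, fun hs => ?_⟩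
  · rw [hJ]
    rcases s with _ | s
    · decide
    · simp only [Nat.add_one_ne_zero, if_false, Nat.choose_zero_right,
        Nat.choose_succ_succ', show s + 1 + 1 + 2 = s + 3 + 1 by ring]
      push_cast [Nat.choose_one_right]
      ring
  · rw [hS, hJ, if_neg (by omega)]
    ring
  · obtain rfl : s = 0 := by omega
    rw [hS, hJ, if_pos rfl]
end
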